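/- arXiv:2507.13172 — 2 statements merged into one kernel-verified Lean document; each statement's English description precedes it below -/
import Mathlib

section
/- Let 3 ≤ N ≤ 5, let α > 1, β > 1 with α + β = 2*, let U_n be the truncated Aubin–Talenti bubbles, and let u, v : ℝ^N → ℝ be continuous functions with u(x) > 0 and v(x) > 0 for all x. Then there exist constants A₁ > 0 and A₂ > 0 such that for all integers n ≥ 1, all t ≥ 0 and all x ∈ ℝ^N: (u(x) + t U_n(x))^α (v(x) + √(β/α) t U_n(x))^β − u(x)^α v(x)^β − (β/α)^{β/2} t^{2*} U_n(x)^{2*} − α u(x)^{α−1} v(x)^β t U_n(x) − β v(x)^{β−1} u(x)^α √(β/α) t U_n(x) ≥ A₁ (β/α)^{β/2} t^{2*−1} U_n(x)^{2*−1} − A₂ (β/α)^{β/2} t² U_n(x)². -/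
open Real

/-- The critical Sobolev exponent `2* = 2N/(N-2)`. -/
noncomputable def twoStar (N : ℕ) : ℝ := 2 * (N : ℝ) / ((N : ℝ) - 2)

/-- The radial profile of the truncated Aubin–Talenti bubble. -/
noncomputable def bubbleProfile (N n : ℕ) (r : ℝ) : ℝ :=
  if r < 1 then
    ((N : ℝ) * ((N : ℝ) - 2)) ^ (((N : ℝ) - 2) / 4)
      * ((n : ℝ) / (1 + (n : ℝ) ^ 2 * r ^ 2)) ^ (((N : ℝ) - 2) / 2)
  else if r < 2 then
    ((N : ℝ) * ((N : ℝ) - 2)) ^ (((N : ℝ) - 2) / 4)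
      * ((n : ℝ) / (1 + (n : ℝ) ^ 2)) ^ (((N : ℝ) - 2) / 2) * (2 - r)
  else 0

/-- The truncated Aubin–Talenti bubble `U_n` on `ℝ^N`. -/
noncomputable def Ubub (N n : ℕ) (x : EuclideanSpace ℝ (Fin N)) : ℝ :=
  bubbleProfile N n ‖x‖


lemma bern {a s α : ℝ} (ha : 0 < a) (hs : 0 ≤ s) (hα : 1 ≤ α) :
    a ^ α + α * a ^ (α - 1) * s ≤ (a + s) ^ α := by
  have h0 : (0:ℝ) ≤ s / a := div_nonneg hs ha.le
  have h1 : (0:ℝ) ≤ 1 + s / a := by linarith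
  have hb := one_add_mul_self_le_rpow_one_add (by linarith : (-1:ℝ) ≤ s / a) hα
  have key : a ^ α * (1 + α * (s / a)) ≤ a ^ α * (1 + s / a) ^ α :=
    mul_le_mul_of_nonneg_left hb (Real.rpow_nonneg ha.le _)
  have h2 : a ^ α * (1 + s / a) ^ α = (a + s) ^ α := by
    rw [← Real.mul_rpow ha.le h1]; congr 1; field_simp
  have h3 : a ^ α * (1 + α * (s / a)) = a ^ α + α * a ^ (α - 1) * s := by
    rw [Real.rpow_sub_one ha.ne']; field_simp
  rw [h2] at key; rw [h3] at key; exact key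

lemma rpow_le_rpow_exp {s e e' : ℝ} (hs : 0 ≤ s) (hs1 : s ≤ 1) (he' : 0 < e') (hee : e' ≤ e) :
    s ^ e ≤ s ^ e' := by
  rcases eq_or_lt_of_le hs with h | h
  · rw [← h, Real.zero_rpow (by linarith), Real.zero_rpow (by linarith)]
  · exact Real.rpow_le_rpow_of_exponent_ge h hs1 hee

lemma scalar_key {α β κ m M : ℝ} (hα : 1 < α) (hβ : 1 < β) (hκ : 0 < κ)
    (hm : 0 < m) (hM1 : 1 ≤ M) (hp3 : 3 ≤ α + β)
    {a b s : ℝ} (ham : m ≤ a) (haM : a ≤ M) (hbm : m ≤ b) (hbM : b ≤ M) (hs : 0 ≤ s) :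
    α * m * κ ^ β * s ^ (α + β - 1)
      - ((1 + α * m) + (M ^ (α + β) + (α + β * κ) * M ^ (α + β - 1)) / κ ^ β) * κ ^ β * s ^ 2
      ≤ (a + s) ^ α * (b + κ * s) ^ β - a ^ α * b ^ β - κ ^ β * s ^ (α + β)
        - α * a ^ (α - 1) * b ^ β * s - β * b ^ (β - 1) * a ^ α * κ * s := by
  have ha : 0 < a := lt_of_lt_of_le hm ham
  have hb : 0 < b := lt_of_lt_of_le hm hbm
  have hκβ : 0 < κ ^ β := Real.rpow_pos_of_pos hκ β
  have hκs : 0 ≤ κ * s := mul_nonneg hκ.le hs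
  have hMp : (0:ℝ) < M := by linarith
  have hposa : 0 ≤ a ^ α := Real.rpow_nonneg ha.le _
  have hposa1 : 0 ≤ a ^ (α - 1) := Real.rpow_nonneg ha.le _
  have hposb : 0 ≤ b ^ β := Real.rpow_nonneg hb.le _
  have hposb1 : 0 ≤ b ^ (β - 1) := Real.rpow_nonneg hb.le _
  have hMab' : 0 ≤ M ^ (α + β) := Real.rpow_nonneg hMp.le _
  have hMab1' : 0 ≤ M ^ (α + β - 1) := Real.rpow_nonneg hMp.le _
  have hβκ : 0 < β * κ := mul_pos (by linarith) hκ
  have hC : 0 ≤ (M ^ (α + β) + (α + β * κ) * M ^ (α + β - 1)) := by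
    have h := mul_nonneg (by linarith : (0:ℝ) ≤ α + β * κ) hMab1'
    linarith
  have hCκ : 0 ≤ (M ^ (α + β) + (α + β * κ) * M ^ (α + β - 1)) / κ ^ β :=
    div_nonneg hC hκβ.le
  rcases le_total s 1 with hs1 | hs1
  · -- small s
    have hba := bern ha hs hα.le
    have hbb := bern hb hκs hβ.le
    have hB0 : 0 ≤ β * b ^ (β - 1) * (κ * s) :=
      mul_nonneg (mul_nonneg (by linarith) hposb1) hκs
    have hprod : (a ^ α + α * a ^ (α - 1) * s) * (b ^ β + β * b ^ (β - 1) * (κ * s))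
        ≤ (a + s) ^ α * (b + κ * s) ^ β :=
      mul_le_mul hba hbb (by linarith) (Real.rpow_nonneg (by linarith) α)
    have hcross : 0 ≤ (α * a ^ (α - 1) * s) * (β * b ^ (β - 1) * (κ * s)) :=
      mul_nonneg (mul_nonneg (mul_nonneg (by linarith) hposa1) hs) hB0
    have hg : a ^ α * b ^ β + α * a ^ (α - 1) * b ^ β * s + β * b ^ (β - 1) * a ^ α * κ * s
        ≤ (a + s) ^ α * (b + κ * s) ^ β := by linarith [hprod, hcross]
    have h1 : s ^ (α + β) ≤ s ^ 2 := by
      rw [← Real.rpow_natCast s 2]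
      apply rpow_le_rpow_exp hs hs1 <;> push_cast <;> linarith
    have h2 : s ^ (α + β - 1) ≤ s ^ 2 := by
      rw [← Real.rpow_natCast s 2]
      apply rpow_le_rpow_exp hs hs1 <;> push_cast <;> linarith
    have t1 := mul_le_mul_of_nonneg_left h2
      (by positivity : (0:ℝ) ≤ (α * m) * κ ^ β)
    have t2 := mul_le_mul_of_nonneg_left h1 hκβ.le
    have t3 : 0 ≤ ((M ^ (α + β) + (α + β * κ) * M ^ (α + β - 1)) / κ ^ β) * (κ ^ β * s ^ 2) :=
      mul_nonneg hCκ (mul_nonneg hκβ.le (sq_nonneg s))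
    linarith [hg, t1, t2, t3]
  · -- large s
    have hspos : (0:ℝ) < s := lt_of_lt_of_le one_pos hs1
    have hsp1 : 0 ≤ s ^ (α + β - 1) := Real.rpow_nonneg hs _
    have hba : s ^ α + α * s ^ (α - 1) * a ≤ (a + s) ^ α := by
      have := bern hspos ha.le hα.le
      rwa [add_comm s a] at this
    have hbb : κ ^ β * s ^ β ≤ (b + κ * s) ^ β := by
      rw [← Real.mul_rpow hκ.le hs]
      exact Real.rpow_le_rpow hκs (by linarith) (by linarith)
    have hprod : (s ^ α + α * s ^ (α - 1) * a) * (κ ^ β * s ^ β)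
        ≤ (a + s) ^ α * (b + κ * s) ^ β := by
      apply mul_le_mul hba hbb
      · positivity
      · exact Real.rpow_nonneg (by linarith) α
    have hsab : s ^ α * s ^ β = s ^ (α + β) := (Real.rpow_add hspos α β).symm
    have hsab1 : s ^ (α - 1) * s ^ β = s ^ (α + β - 1) := by
      rw [← Real.rpow_add hspos]; ring_nf
    have hg : κ ^ β * s ^ (α + β) + α * a * κ ^ β * s ^ (α + β - 1)
        ≤ (a + s) ^ α * (b + κ * s) ^ β := by
      calc κ ^ β * s ^ (α + β) + α * a * κ ^ β * s ^ (α + β - 1)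
          = (s ^ α + α * s ^ (α - 1) * a) * (κ ^ β * s ^ β) := by
            rw [← hsab, ← hsab1]; ring
        _ ≤ _ := hprod
    have haα : a ^ α ≤ M ^ α := Real.rpow_le_rpow ha.le haM (by linarith)
    have hbβ : b ^ β ≤ M ^ β := Real.rpow_le_rpow hb.le hbM (by linarith)
    have haα1 : a ^ (α - 1) ≤ M ^ (α - 1) := Real.rpow_le_rpow ha.le haM (by linarith)
    have hbβ1 : b ^ (β - 1) ≤ M ^ (β - 1) := Real.rpow_le_rpow hb.le hbM (by linarith)
    have hMab : M ^ α * M ^ β = M ^ (α + β) := (Real.rpow_add hMp α β).symm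
    have hMab1 : M ^ (α - 1) * M ^ β = M ^ (α + β - 1) := by
      rw [← Real.rpow_add hMp]; ring_nf
    have hMab2 : M ^ α * M ^ (β - 1) = M ^ (α + β - 1) := by
      rw [← Real.rpow_add hMp]; ring_nf
    have hposMa : 0 ≤ M ^ α := Real.rpow_nonneg hMp.le _
    have hposMa1 : 0 ≤ M ^ (α - 1) := Real.rpow_nonneg hMp.le _
    have hf0 : a ^ α * b ^ β ≤ M ^ (α + β) := by
      rw [← hMab]; exact mul_le_mul haα hbβ hposb hposMa
    have hf1 : a ^ (α - 1) * b ^ β ≤ M ^ (α + β - 1) := by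
      rw [← hMab1]; exact mul_le_mul haα1 hbβ hposb hposMa1
    have hf2 : a ^ α * b ^ (β - 1) ≤ M ^ (α + β - 1) := by
      rw [← hMab2]; exact mul_le_mul haα hbβ1 hposb1 hposMa
    set C := M ^ (α + β) + (α + β * κ) * M ^ (α + β - 1) with hCdef
    clear_value C
    have hlin : a ^ α * b ^ β + α * a ^ (α - 1) * b ^ β * s + β * b ^ (β - 1) * a ^ α * κ * s
        ≤ C * s := by
      have h1 : a ^ α * b ^ β ≤ M ^ (α + β) * s := by
        have := mul_le_mul_of_nonneg_left hs1 hMab'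
        linarith
      have h2 : α * (a ^ (α - 1) * b ^ β) * s ≤ α * M ^ (α + β - 1) * s :=
        mul_le_mul_of_nonneg_right
          (mul_le_mul_of_nonneg_left hf1 (by linarith : (0:ℝ) ≤ α)) hs
      have h3 : β * κ * (a ^ α * b ^ (β - 1)) * s ≤ β * κ * M ^ (α + β - 1) * s :=
        mul_le_mul_of_nonneg_right
          (mul_le_mul_of_nonneg_left hf2 hβκ.le) hs
      rw [hCdef]
      linarith
    have hterm := mul_le_mul_of_nonneg_right
      (mul_le_mul_of_nonneg_left ham (by linarith : (0:ℝ) ≤ α))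
      (mul_nonneg hκβ.le hsp1)
    have hA2s : C * s ≤ (C / κ ^ β) * κ ^ β * s ^ 2 := by
      rw [div_mul_cancel₀ _ hκβ.ne']
      linarith [mul_nonneg hC (mul_nonneg (by linarith : (0:ℝ) ≤ s - 1) hs)]
    linarith [hg, hlin, hterm, hA2s,
      mul_nonneg (mul_nonneg (by positivity : (0:ℝ) ≤ 1 + α * m) hκβ.le) (sq_nonneg s)]


lemma Ubub_nonneg {N n : ℕ} (hN : 3 ≤ N) (x : EuclideanSpace ℝ (Fin N)) :
    0 ≤ Ubub N n x := by
  have hN' : (3:ℝ) ≤ (N:ℝ) := by exact_mod_cast hN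
  have hbase : (0:ℝ) ≤ (N:ℝ) * ((N:ℝ) - 2) := by nlinarith
  unfold Ubub bubbleProfile
  split_ifs with h1 h2
  · exact mul_nonneg (Real.rpow_nonneg hbase _)
      (Real.rpow_nonneg (by positivity) _)
  · exact mul_nonneg (mul_nonneg (Real.rpow_nonneg hbase _)
      (Real.rpow_nonneg (by positivity) _)) (by linarith)
  · exact le_refl 0

lemma Ubub_zero {N n : ℕ} {x : EuclideanSpace ℝ (Fin N)} (h : ¬ ‖x‖ < 2) :
    Ubub N n x = 0 := by
  have h1 : ¬ ‖x‖ < 1 := fun hc => h (hc.trans one_lt_two)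
  simp [Ubub, bubbleProfile, h1, h]

theorem stmt_12 (N : ℕ) (hN₃ : 3 ≤ N) (hN₅ : N ≤ 5) (α β : ℝ)
    (hα : 1 < α) (hβ : 1 < β) (hαβ : α + β = twoStar N)
    (u v : EuclideanSpace ℝ (Fin N) → ℝ)
    (hu : Continuous u) (hv : Continuous v)
    (hupos : ∀ x, 0 < u x) (hvpos : ∀ x, 0 < v x) :
    ∃ A₁ : ℝ, 0 < A₁ ∧ ∃ A₂ : ℝ, 0 < A₂ ∧
      ∀ (n : ℕ), 1 ≤ n → ∀ (t : ℝ), 0 ≤ t → ∀ x : EuclideanSpace ℝ (Fin N),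
        A₁ * (β / α) ^ (β / 2) * t ^ (twoStar N - 1) * (Ubub N n x) ^ (twoStar N - 1)
            - A₂ * (β / α) ^ (β / 2) * t ^ 2 * (Ubub N n x) ^ 2 ≤
          (u x + t * Ubub N n x) ^ α * (v x + Real.sqrt (β / α) * t * Ubub N n x) ^ β
            - (u x) ^ α * (v x) ^ β
            - (β / α) ^ (β / 2) * t ^ (twoStar N) * (Ubub N n x) ^ (twoStar N)
            - α * (u x) ^ (α - 1) * (v x) ^ β * t * Ubub N n x
            - β * (v x) ^ (β - 1) * (u x) ^ α * Real.sqrt (β / α) * t * Ubub N n x := by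
  have hβα : (0:ℝ) < β / α := div_pos (by linarith) (by linarith)
  set κ := Real.sqrt (β / α) with hκdef
  have hκ : 0 < κ := Real.sqrt_pos.mpr hβα
  have hκβ_eq : (β / α) ^ (β / 2) = κ ^ β := by
    rw [show β / 2 = (1/2) * β by ring, Real.rpow_mul hβα.le, hκdef,
      Real.sqrt_eq_rpow]
  have hκβpos : 0 < κ ^ β := Real.rpow_pos_of_pos hκ β
  have hp3 : 3 ≤ α + β := by
    rw [hαβ]; unfold twoStar
    interval_cases N <;> norm_num
  -- compactness bounds on the closed ball of radius 2
  have hK : IsCompact (Metric.closedBall (0 : EuclideanSpace ℝ (Fin N)) 2) :=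
    isCompact_closedBall _ _
  have hKne : (Metric.closedBall (0 : EuclideanSpace ℝ (Fin N)) 2).Nonempty :=
    ⟨0, Metric.mem_closedBall_self (by norm_num)⟩
  obtain ⟨xu, _, hxu⟩ := hK.exists_isMinOn hKne hu.continuousOn
  obtain ⟨xv, _, hxv⟩ := hK.exists_isMinOn hKne hv.continuousOn
  obtain ⟨yu, _, hyu⟩ := hK.exists_isMaxOn hKne hu.continuousOn
  obtain ⟨yv, _, hyv⟩ := hK.exists_isMaxOn hKne hv.continuousOn
  set m := min (u xu) (v xv) with hmdef
  have hm : 0 < m := lt_min (hupos xu) (hvpos xv)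
  set M := max (max (u yu) (v yv)) 1 with hMdef
  have hM1 : 1 ≤ M := le_max_right _ _
  have hCpos : 0 ≤ (M ^ (α + β) + (α + β * κ) * M ^ (α + β - 1)) / κ ^ β := by
    apply div_nonneg _ hκβpos.le
    have h1 : 0 ≤ M ^ (α + β) := Real.rpow_nonneg (by linarith) _
    have h2 : 0 ≤ (α + β * κ) * M ^ (α + β - 1) :=
      mul_nonneg (by nlinarith) (Real.rpow_nonneg (by linarith) _)
    linarith
  refine ⟨α * m, mul_pos (by linarith) hm,
    (1 + α * m) + (M ^ (α + β) + (α + β * κ) * M ^ (α + β - 1)) / κ ^ β,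
    by nlinarith [mul_pos (show (0:ℝ) < α by linarith) hm], ?_⟩
  intro n hn t ht x
  rw [← hαβ, hκβ_eq]
  have hU0 : 0 ≤ Ubub N n x := Ubub_nonneg hN₃ x
  rcases eq_or_lt_of_le hU0 with hU | hU
  · rw [← hU]
    simp [Real.zero_rpow (show α + β - 1 ≠ 0 from ne_of_gt (by linarith)),
      Real.zero_rpow (show α + β ≠ 0 from ne_of_gt (by linarith))]
  · have hx2 : ‖x‖ < 2 := by
      by_contra h
      rw [Ubub_zero h] at hU
      exact lt_irrefl 0 hU
    have hxK : x ∈ Metric.closedBall (0 : EuclideanSpace ℝ (Fin N)) 2 :=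
      mem_closedBall_zero_iff.mpr hx2.le
    have hma : m ≤ u x := le_trans (min_le_left _ _) (isMinOn_iff.mp hxu x hxK)
    have hmb : m ≤ v x := le_trans (min_le_right _ _) (isMinOn_iff.mp hxv x hxK)
    have hMa : u x ≤ M :=
      le_trans (isMaxOn_iff.mp hyu x hxK) (le_trans (le_max_left _ _) (le_max_left _ _))
    have hMb : v x ≤ M :=
      le_trans (isMaxOn_iff.mp hyv x hxK) (le_trans (le_max_right _ _) (le_max_left _ _))
    have key := scalar_key (a := u x) (b := v x) (s := t * Ubub N n x)
      hα hβ hκ hm hM1 hp3 hma hMa hmb hMb (mul_nonneg ht hU0)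
    have e1 : (t * Ubub N n x) ^ (α + β - 1) = t ^ (α + β - 1) * (Ubub N n x) ^ (α + β - 1) :=
      Real.mul_rpow ht hU0
    have e2 : (t * Ubub N n x) ^ (α + β) = t ^ (α + β) * (Ubub N n x) ^ (α + β) :=
      Real.mul_rpow ht hU0
    rw [e1, e2, mul_pow] at key
    calc α * m * κ ^ β * t ^ (α + β - 1) * Ubub N n x ^ (α + β - 1) -
          (1 + α * m + (M ^ (α + β) + (α + β * κ) * M ^ (α + β - 1)) / κ ^ β) * κ ^ β * t ^ 2 *
            Ubub N n x ^ 2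
        = α * m * κ ^ β * (t ^ (α + β - 1) * Ubub N n x ^ (α + β - 1)) -
            (1 + α * m + (M ^ (α + β) + (α + β * κ) * M ^ (α + β - 1)) / κ ^ β) * κ ^ β *
              (t ^ 2 * Ubub N n x ^ 2) := by ring
      _ ≤ _ := key
      _ = _ := by ring
end

section
/- Let N ≥ 3, 2* := 2N/(N−2), let α > 1, β > 1 with α + β = 2*, and let ν > 0, S > 0. Suppose ξ₁, ξ₂, η₁, η₂, η₃ are nonnegative real numbers satisfying ξ₁ = ν α η₃, ξ₂ = ν β η₃, η₁^{2/2*} ≤ S^{−1} ξ₁, η₂^{2/2*} ≤ S^{−1} ξ₂, η₃ ≤ η₁^{α/2*} η₂^{β/2*}, and η₃ > 0. Then η₃ ≥ ν^{−N/2} α^{(2−N)α/4} β^{(2−N)β/4} S^{N/2}. -/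
open Real

theorem stmt_13 (N : ℕ) (hN : 3 ≤ N) (α β ν S : ℝ)
    (hα : 1 < α) (hβ : 1 < β) (hαβ : α + β = twoStar N)
    (hν : 0 < ν) (hS : 0 < S)
    (ξ₁ ξ₂ η₁ η₂ η₃ : ℝ)
    (hξ₁ : 0 ≤ ξ₁) (hξ₂ : 0 ≤ ξ₂) (hη₁ : 0 ≤ η₁) (hη₂ : 0 ≤ η₂) (hη₃ : 0 ≤ η₃)
    (heq₁ : ξ₁ = ν * α * η₃) (heq₂ : ξ₂ = ν * β * η₃)
    (hSob₁ : η₁ ^ (2 / twoStar N) ≤ S⁻¹ * ξ₁)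
    (hSob₂ : η₂ ^ (2 / twoStar N) ≤ S⁻¹ * ξ₂)
    (hHolder : η₃ ≤ η₁ ^ (α / twoStar N) * η₂ ^ (β / twoStar N))
    (hpos : 0 < η₃) :
    ν ^ (-(N : ℝ) / 2) * α ^ ((2 - (N : ℝ)) * α / 4) * β ^ ((2 - (N : ℝ)) * β / 4)
      * S ^ ((N : ℝ) / 2) ≤ η₃ := by
  have hc : (3:ℝ) ≤ (N:ℝ) := by exact_mod_cast hN
  have hc2 : (0:ℝ) < (N:ℝ) - 2 := by linarith
  have ht : 0 < twoStar N := by unfold twoStar; positivity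
  have hαpos : (0:ℝ) < α := by linarith
  have hβpos : (0:ℝ) < β := by linarith
  have hη₁pos : 0 < η₁ := by
    rcases lt_or_eq_of_le hη₁ with h | h
    · exact h
    · exfalso
      rw [← h, Real.zero_rpow (by positivity : α / twoStar N ≠ 0), zero_mul] at hHolder
      linarith
  have hη₂pos : 0 < η₂ := by
    rcases lt_or_eq_of_le hη₂ with h | h
    · exact h
    · exfalso
      rw [← h, Real.zero_rpow (by positivity : β / twoStar N ≠ 0), mul_zero] at hHolder
      linarith
  -- log form of Sobolev inequalities
  have hS1 : (2 / twoStar N) * Real.log η₁ ≤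
      -Real.log S + Real.log ν + Real.log α + Real.log η₃ := by
    have h := Real.log_le_log (by positivity) hSob₁
    rw [Real.log_rpow hη₁pos, heq₁, Real.log_mul (by positivity) (by positivity),
      Real.log_mul (by positivity) (by positivity),
      Real.log_mul (by positivity) (by positivity), Real.log_inv] at h
    linarith
  have hS2 : (2 / twoStar N) * Real.log η₂ ≤
      -Real.log S + Real.log ν + Real.log β + Real.log η₃ := by
    have h := Real.log_le_log (by positivity) hSob₂
    rw [Real.log_rpow hη₂pos, heq₂, Real.log_mul (by positivity) (by positivity),
      Real.log_mul (by positivity) (by positivity),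
      Real.log_mul (by positivity) (by positivity), Real.log_inv] at h
    linarith
  have hH : Real.log η₃ ≤ (α / twoStar N) * Real.log η₁ + (β / twoStar N) * Real.log η₂ := by
    have h := Real.log_le_log hpos hHolder
    rwa [Real.log_mul (by positivity) (by positivity), Real.log_rpow hη₁pos,
      Real.log_rpow hη₂pos] at h
  -- combine
  set a := Real.log α
  set b := Real.log β
  set n := Real.log ν
  set s := Real.log S
  set h3 := Real.log η₃
  have hA : (α / twoStar N) * Real.log η₁ ≤ (α / 2) * (-s + n + a + h3) := by
    have h := mul_le_mul_of_nonneg_left hS1 (le_of_lt (half_pos hαpos))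
    have e : α / 2 * ((2 / twoStar N) * Real.log η₁) = (α / twoStar N) * Real.log η₁ := by
      field_simp
    rw [e] at h; linarith
  have hB : (β / twoStar N) * Real.log η₂ ≤ (β / 2) * (-s + n + b + h3) := by
    have h := mul_le_mul_of_nonneg_left hS2 (le_of_lt (half_pos hβpos))
    have e : β / 2 * ((2 / twoStar N) * Real.log η₂) = (β / twoStar N) * Real.log η₂ := by
      field_simp
    rw [e] at h; linarith
  have hcomb : h3 ≤ (α / 2) * (-s + n + a + h3) + (β / 2) * (-s + n + b + h3) := by linarith
  have hsum : (α + β) * ((N:ℝ) - 2) = 2 * (N:ℝ) := by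
    rw [hαβ]; unfold twoStar; field_simp
  have h2 : ((N:ℝ) - 2) * h3 ≤
      ((N:ℝ) - 2) * ((α / 2) * (-s + n + a + h3) + (β / 2) * (-s + n + b + h3)) :=
    mul_le_mul_of_nonneg_left hcomb (by linarith)
  have h4 : ((N:ℝ) - 2) * (α / 2 + β / 2) * (-s + n + h3) = (N:ℝ) * (-s + n + h3) := by
    linear_combination ((-s + n + h3) / 2) * hsum
  have hlog : -(N:ℝ) / 2 * n + (2 - (N:ℝ)) * α / 4 * a + (2 - (N:ℝ)) * β / 4 * b
      + (N:ℝ) / 2 * s ≤ h3 := by nlinarith [h2, h4]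
  have hLpos : 0 < ν ^ (-(N : ℝ) / 2) * α ^ ((2 - (N : ℝ)) * α / 4) *
      β ^ ((2 - (N : ℝ)) * β / 4) * S ^ ((N : ℝ) / 2) := by positivity
  rw [← Real.log_le_log_iff hLpos hpos]
  rw [Real.log_mul (by positivity) (by positivity), Real.log_mul (by positivity) (by positivity),
    Real.log_mul (by positivity) (by positivity), Real.log_rpow hν, Real.log_rpow hαpos,
    Real.log_rpow hβpos, Real.log_rpow hS]
  exact hlog
end
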